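/- Let n ≥ 1 and let m_1,…,m_n be positive integers, with the conventions m_0 = m_{n+1} = 0. If m_i > max(m_{i−1}, m_{i+1}) for some 1 ≤ i ≤ n, then N([m_n,…,m_1]) = N([m_n,…,m_{i+1}, m_i − |m_{i−1} − m_{i+1}|, m_{i−1},…,m_1]), i.e. the number of connected components of the up-and-down graph is unchanged when the entry m_i is replaced by m_i − |m_{i−1} − m_{i+1}|. -/

import Mathlib

/-!
Since `r = s`, colours play no role: between levels `l` and `l - 1` the graph joins the lowest
`m l` vertices of both levels and the highest `m l` vertices of both levels. Assume
`m (i-1) > m (i+1)` (the other case follows by reversing the order of the levels) and put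
`d = m (i-1) - m (i+1)`. Going up to level `i` and back down, a vertex of level `i - 1` at position
`p > m (i-1)` is connected to position `p - d`. Hence every vertex of levels `i - 1`, `i` at a
position `≤ m i` is connected to the representative of its position modulo `d` in the window
`(m (i+1), m (i-1)]` of level `i - 1`, while the vertices above `m i` look the same for every
value of `m i`. Collapsing accordingly gives maps in both directions between the graphs for `m i`
and for any `m' i > m (i+1)` congruent to `m i` modulo `d`, which preserve connectivity and are
inverse to each other up to connectivity; `m i - d` is such a value.
-/

/-- Vertices `e^(i)_j` of the up-and-down graph: pairs `(i, j)` with `0 ≤ i ≤ n`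
and `1 ≤ j ≤ β i`. -/
def UDVert (n : ℕ) (β : ℕ → ℕ) : Type :=
  {p : ℕ × ℕ // p.1 ≤ n ∧ 1 ≤ p.2 ∧ p.2 ≤ β p.1}

/-- The red edges of the up-and-down graph `Γ(β; r, s)`: for `1 ≤ i ≤ n`, if `n - i`
is even they join `e^(i)_j` to `e^(i-1)_j` for `1 ≤ j ≤ r i`, and if `n - i` is odd
they join `e^(i)_{β i + 1 - j}` to `e^(i-1)_{β (i-1) + 1 - j}` for `1 ≤ j ≤ r i`. -/
def RedAdj (n : ℕ) (β r : ℕ → ℕ) (p q : ℕ × ℕ) : Prop :=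
  ∃ i j : ℕ, 1 ≤ i ∧ i ≤ n ∧ 1 ≤ j ∧ j ≤ r i ∧
    ((Even (n - i) ∧
        ((p = (i, j) ∧ q = (i - 1, j)) ∨ (q = (i, j) ∧ p = (i - 1, j)))) ∨
      (¬ Even (n - i) ∧
        ((p = (i, β i + 1 - j) ∧ q = (i - 1, β (i - 1) + 1 - j)) ∨
          (q = (i, β i + 1 - j) ∧ p = (i - 1, β (i - 1) + 1 - j)))))

/-- The blue edges of the up-and-down graph `Γ(β; r, s)`: for `1 ≤ i ≤ n`, if `n - i`
is even they join `e^(i)_{β i + 1 - j}` to `e^(i-1)_{β (i-1) + 1 - j}` for `1 ≤ j ≤ s i`,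
and if `n - i` is odd they join `e^(i)_j` to `e^(i-1)_j` for `1 ≤ j ≤ s i`. -/
def BlueAdj (n : ℕ) (β s : ℕ → ℕ) (p q : ℕ × ℕ) : Prop :=
  ∃ i j : ℕ, 1 ≤ i ∧ i ≤ n ∧ 1 ≤ j ∧ j ≤ s i ∧
    ((¬ Even (n - i) ∧
        ((p = (i, j) ∧ q = (i - 1, j)) ∨ (q = (i, j) ∧ p = (i - 1, j)))) ∨
      (Even (n - i) ∧
        ((p = (i, β i + 1 - j) ∧ q = (i - 1, β (i - 1) + 1 - j)) ∨
          (q = (i, β i + 1 - j) ∧ p = (i - 1, β (i - 1) + 1 - j)))))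

/-- The up-and-down graph `Γ(β; r, s)` (edges of both colors). -/
def UDGraph (n : ℕ) (β r s : ℕ → ℕ) : SimpleGraph (UDVert n β) where
  Adj x y := x ≠ y ∧ (RedAdj n β r x.1 y.1 ∨ BlueAdj n β s x.1 y.1)
  symm := by
    refine ⟨?_⟩
    rintro x y ⟨hxy, h⟩
    refine ⟨hxy.symm, ?_⟩
    rcases h with ⟨i, j, h1, h2, h3, h4, h5⟩ | ⟨i, j, h1, h2, h3, h4, h5⟩
    · exact Or.inl ⟨i, j, h1, h2, h3, h4, by tauto⟩
    · exact Or.inr ⟨i, j, h1, h2, h3, h4, by tauto⟩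
  loopless := by refine ⟨?_⟩; rintro x ⟨h, -⟩; exact h rfl

/-- The sequence `m` extended by the conventions `m 0 = m (n+1) = 0` (entries outside
`1,…,n` are set to `0`). -/
def bandM (n : ℕ) (m : ℕ → ℕ) : ℕ → ℕ := fun i => if 1 ≤ i ∧ i ≤ n then m i else 0

/-- The band dimension vector `[m_n, …, m_1]`, i.e. `β i = m i + m (i+1)` with the
conventions `m 0 = m (n+1) = 0`. -/
def bandBeta (n : ℕ) (m : ℕ → ℕ) : ℕ → ℕ := fun i => bandM n m i + bandM n m (i + 1)

/-- The up-and-down graph `Γ([m_n, …, m_1])` of a band dimension vector: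
`r = s = (m_1, …, m_n)`. -/
def bandGraph (n : ℕ) (m : ℕ → ℕ) : SimpleGraph (UDVert n (bandBeta n m)) :=
  UDGraph n (bandBeta n m) (bandM n m) (bandM n m)

/-- `N([m_n, …, m_1])`: the number of connected components of `Γ([m_n, …, m_1])`. -/
noncomputable def NBand (n : ℕ) (m : ℕ → ℕ) : ℕ :=
  Nat.card (bandGraph n m).ConnectedComponent

open SimpleGraph

theorem SimpleGraph.Reachable.map_of_adj {V W : Type*} {G : SimpleGraph V} {H : SimpleGraph W}
    {f : V → W} (hf : ∀ x y, G.Adj x y → H.Reachable (f x) (f y)) {x y : V}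
    (h : G.Reachable x y) : H.Reachable (f x) (f y) := by
  obtain ⟨p⟩ := h
  induction p with
  | nil => rfl
  | cons hadj _ ih => exact (hf _ _ hadj).trans ih

theorem SimpleGraph.card_connectedComponent_eq_of_reachable {V W : Type*} {G : SimpleGraph V}
    {H : SimpleGraph W} (f : V → W) (g : W → V)
    (hf : ∀ x y, G.Adj x y → H.Reachable (f x) (f y))
    (hg : ∀ x y, H.Adj x y → G.Reachable (g x) (g y))
    (hgf : ∀ x, G.Reachable x (g (f x))) (hfg : ∀ y, H.Reachable y (f (g y))) :
    Nat.card G.ConnectedComponent = Nat.card H.ConnectedComponent :=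
  Nat.card_congr
    { toFun := ConnectedComponent.lift (fun v => H.connectedComponentMk (f v))
        fun _ _ p _ => ConnectedComponent.sound (p.reachable.map_of_adj hf)
      invFun := ConnectedComponent.lift (fun w => G.connectedComponentMk (g w))
        fun _ _ p _ => ConnectedComponent.sound (p.reachable.map_of_adj hg)
      left_inv := ConnectedComponent.ind fun v => ConnectedComponent.sound (hgf v).symm
      right_inv := ConnectedComponent.ind fun w => ConnectedComponent.sound (hfg w).symm }

theorem SimpleGraph.reachable_comap_val_of_closed {V : Type*} {G : SimpleGraph V} {S : V → Prop}
    (hS : ∀ u v, G.Adj u v → S u → S v) {x y : Subtype S} (h : G.Reachable x.1 y.1) :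
    (G.comap Subtype.val).Reachable x y := by
  suffices ∀ u w (p : G.Walk u w) (hu : S u) (hw : S w),
      (G.comap Subtype.val).Reachable ⟨u, hu⟩ ⟨w, hw⟩ from this _ _ h.some x.2 y.2
  intro u w p
  induction p with
  | nil => exact fun _ _ => Reachable.refl _
  | cons hadj _ ih =>
    exact fun hu hw => (Adj.reachable (G := G.comap Subtype.val) (u := ⟨_, hu⟩)
      (v := ⟨_, hS _ _ hadj hu⟩) hadj).trans (ih _ hw)

/-- The edges of `Γ` without their colours, for `μ` the sequence `m` extended by zero: level `l`
carries `μ l + μ (l + 1)` vertices, and `bottom` resp. `top` join the lowest resp. highest `μ l`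
vertices of levels `l` and `l - 1`. -/
inductive LevelEdge (μ : ℕ → ℕ) : ℕ × ℕ → ℕ × ℕ → Prop
  | bottom {l k : ℕ} : 1 ≤ l → 1 ≤ k → k ≤ μ l → LevelEdge μ (l, k) (l - 1, k)
  | top {l k : ℕ} : 1 ≤ l → 1 ≤ k → k ≤ μ l →
      LevelEdge μ (l, μ (l + 1) + k) (l - 1, μ (l - 1) + k)

def levelGraph (μ : ℕ → ℕ) : SimpleGraph (ℕ × ℕ) := SimpleGraph.fromRel (LevelEdge μ)

def IsVert (n : ℕ) (μ : ℕ → ℕ) (u : ℕ × ℕ) : Prop :=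
  u.1 ≤ n ∧ 1 ≤ u.2 ∧ u.2 ≤ μ u.1 + μ (u.1 + 1)

section LevelGraph

variable {μ : ℕ → ℕ} {u v : ℕ × ℕ}

theorem LevelEdge.adj (h : LevelEdge μ u v) : (levelGraph μ).Adj u v := by
  refine (fromRel_adj _ _ _).2 ⟨?_, Or.inl h⟩
  cases h <;> simp only [ne_eq, Prod.mk.injEq] <;> omega

theorem levelGraph_adj_bottom {l k : ℕ} (hl : 1 ≤ l) (hk : 1 ≤ k) (hkl : k ≤ μ l) :
    (levelGraph μ).Adj (l, k) (l - 1, k) :=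
  (LevelEdge.bottom hl hk hkl).adj

theorem levelGraph_adj_top {l k : ℕ} (hl : 1 ≤ l) (hk : 1 ≤ k) (hkl : k ≤ μ l) :
    (levelGraph μ).Adj (l, μ (l + 1) + k) (l - 1, μ (l - 1) + k) :=
  (LevelEdge.top hl hk hkl).adj

end LevelGraph

section Band

variable {n : ℕ} {m : ℕ → ℕ}

theorem le_of_bandM_pos {l : ℕ} (h : 0 < bandM n m l) : l ≤ n := by
  unfold bandM at h; split_ifs at h with hl <;> omega

theorem levelEdge_of_redAdj_or_blueAdj {u v : ℕ × ℕ}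
    (h : RedAdj n (bandBeta n m) (bandM n m) u v ∨ BlueAdj n (bandBeta n m) (bandM n m) u v) :
    LevelEdge (bandM n m) u v ∨ LevelEdge (bandM n m) v u := by
  obtain ⟨l, j, hl, -, hj, hjl, h⟩ | ⟨l, j, hl, -, hj, hjl, h⟩ := h <;>
  · have hb := LevelEdge.bottom hl hj hjl
    have ht := LevelEdge.top (μ := bandM n m) hl (k := bandM n m l + 1 - j) (by omega) (by omega)
    have hβ : bandBeta n m (l - 1) = bandM n m (l - 1) + bandM n m l := by
      rw [bandBeta, Nat.sub_add_cancel hl]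
    rw [show bandM n m (l + 1) + (bandM n m l + 1 - j) = bandBeta n m l + 1 - j by
        unfold bandBeta; omega,
      show bandM n m (l - 1) + (bandM n m l + 1 - j) = bandBeta n m (l - 1) + 1 - j by
        omega] at ht
    rcases h with ⟨-, ⟨rfl, rfl⟩ | ⟨rfl, rfl⟩⟩ | ⟨-, ⟨rfl, rfl⟩ | ⟨rfl, rfl⟩⟩ <;>
      tauto

theorem redAdj_or_blueAdj_of_levelEdge {u v : ℕ × ℕ} (h : LevelEdge (bandM n m) u v) :
    RedAdj n (bandBeta n m) (bandM n m) u v ∨ BlueAdj n (bandBeta n m) (bandM n m) u v := by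
  cases h with
  | @bottom l k hl hk hkl =>
    have hln : l ≤ n := le_of_bandM_pos (m := m) (by omega)
    by_cases he : Even (n - l)
    · exact Or.inl ⟨l, k, hl, hln, hk, hkl, Or.inl ⟨he, Or.inl ⟨rfl, rfl⟩⟩⟩
    · exact Or.inr ⟨l, k, hl, hln, hk, hkl, Or.inl ⟨he, Or.inl ⟨rfl, rfl⟩⟩⟩
  | @top l k hl hk hkl =>
    have hln : l ≤ n := le_of_bandM_pos (m := m) (by omega)
    have hβ : bandBeta n m (l - 1) = bandM n m (l - 1) + bandM n m l := by
      rw [bandBeta, Nat.sub_add_cancel hl]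
    have hu : (l, bandM n m (l + 1) + k) = (l, bandBeta n m l + 1 - (bandM n m l + 1 - k)) := by
      unfold bandBeta; congr 1; omega
    have hv : (l - 1, bandM n m (l - 1) + k) =
        (l - 1, bandBeta n m (l - 1) + 1 - (bandM n m l + 1 - k)) := by
      congr 1; omega
    by_cases he : Even (n - l)
    · exact Or.inr ⟨l, _, hl, hln, by omega, by omega, Or.inr ⟨he, Or.inl ⟨hu, hv⟩⟩⟩
    · exact Or.inl ⟨l, _, hl, hln, by omega, by omega, Or.inr ⟨he, Or.inl ⟨hu, hv⟩⟩⟩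

theorem bandGraph_eq_comap :
    bandGraph n m = (levelGraph (bandM n m)).comap fun x : UDVert n (bandBeta n m) => x.1 := by
  ext x y
  change _ ↔ x.1 ≠ y.1 ∧ (LevelEdge _ x.1 y.1 ∨ LevelEdge _ y.1 x.1)
  constructor
  · rintro ⟨hne, h⟩
    exact ⟨Subtype.coe_ne_coe.2 hne, levelEdge_of_redAdj_or_blueAdj h⟩
  · rintro ⟨hne, h | h⟩
    · exact ⟨Subtype.coe_ne_coe.1 hne, redAdj_or_blueAdj_of_levelEdge h⟩
    · exact (bandGraph n m).adj_symm
        ⟨Subtype.coe_ne_coe.1 hne.symm, redAdj_or_blueAdj_of_levelEdge h⟩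

theorem LevelEdge.isVert {u v : ℕ × ℕ} (h : LevelEdge (bandM n m) u v) :
    IsVert n (bandM n m) u ∧ IsVert n (bandM n m) v := by
  cases h with
  | @bottom l k hl hk hkl | @top l k hl hk hkl =>
    have hln : l ≤ n := le_of_bandM_pos (m := m) (by omega)
    simp only [IsVert, Nat.sub_add_cancel hl]
    omega

theorem isVert_of_adj {u v : ℕ × ℕ} (h : (levelGraph (bandM n m)).Adj u v) :
    IsVert n (bandM n m) v := by
  rcases ((fromRel_adj _ _ _).1 h).2 with h | h
  exacts [h.isVert.2, h.isVert.1]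

end Band

theorem Nat.sub_add_modEq {p B B' d : ℕ} (h : B ≤ p) (hB : B ≡ B' [MOD d]) :
    p - B + B' ≡ p [MOD d] := by
  refine Nat.ModEq.add_right_cancel' B ?_
  rw [show p - B + B' + B = p + B' by omega]
  exact (hB.add_left p).symm

/-- The representative of `p > c` in the window `(c, a]` modulo `a - c`. -/
def windowRep (c a p : ℕ) : ℕ := if p ≤ c then p else c + 1 + (p - c - 1) % (a - c)

section WindowRep

variable {c a p q : ℕ}

theorem windowRep_of_le (h : p ≤ a) : windowRep c a p = p := by
  unfold windowRep
  split_ifs with hpc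
  · rfl
  · rw [Nat.mod_eq_of_lt (by omega)]
    omega

theorem windowRep_le (hca : c < a) : windowRep c a p ≤ a := by
  unfold windowRep
  split_ifs with hpc
  · omega
  · have := Nat.mod_lt (p - c - 1) (show 0 < a - c by omega)
    omega

theorem one_le_windowRep (hp : 1 ≤ p) : 1 ≤ windowRep c a p := by
  unfold windowRep
  split_ifs <;> omega

theorem windowRep_eq_of_modEq (hp : c < p) (hq : c < q) (h : p ≡ q [MOD a - c]) :
    windowRep c a p = windowRep c a q := by
  have : p - c - 1 ≡ q - c - 1 [MOD a - c] :=
    Nat.ModEq.add_right_cancel' (c + 1) (by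
      rwa [show p - c - 1 + (c + 1) = p by omega, show q - c - 1 + (c + 1) = q by omega])
  rw [windowRep, windowRep, if_neg (by omega), if_neg (by omega), this]

end WindowRep

section WindowReachable

variable {μ : ℕ → ℕ} {i : ℕ}

theorem reachable_windowRep (hi : 1 ≤ i) (hca : μ (i + 1) < μ (i - 1)) {p : ℕ}
    (hp : p ≤ μ i + (μ (i - 1) - μ (i + 1))) :
    (levelGraph μ).Reachable (i - 1, p) (i - 1, windowRep (μ (i + 1)) (μ (i - 1)) p) := by
  induction p using Nat.strong_induction_on with
  | _ p ih =>
  by_cases hpa : p ≤ μ (i - 1)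
  · rw [windowRep_of_le hpa]
  · set d := μ (i - 1) - μ (i + 1)
    have htop := levelGraph_adj_top (μ := μ) hi (k := p - μ (i - 1)) (by omega) (by omega)
    have hbot := levelGraph_adj_bottom (μ := μ) hi (k := p - d) (by omega) (by omega)
    rw [show μ (i + 1) + (p - μ (i - 1)) = p - d by omega,
      show μ (i - 1) + (p - μ (i - 1)) = p by omega] at htop
    rw [← windowRep_eq_of_modEq (p := p - d) (by omega) (by omega)
      ((Nat.sub_modulus_modEq_iff (by omega)).2 rfl)]
    exact htop.symm.reachable.trans (hbot.reachable.trans (ih _ (by omega) (by omega)))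

theorem reachable_windowRep_of_le (hi : 1 ≤ i) (hca : μ (i + 1) < μ (i - 1)) {l p : ℕ}
    (hl : l = i - 1 ∨ l = i) (hp : 1 ≤ p) (hpi : p ≤ μ i) :
    (levelGraph μ).Reachable (l, p) (i - 1, windowRep (μ (i + 1)) (μ (i - 1)) p) := by
  have h := reachable_windowRep hi hca (p := p) (by omega)
  rcases hl with rfl | rfl
  exacts [h, (levelGraph_adj_bottom hi hp hpi).reachable.trans h]

end WindowReachable

def collapse (μ ν : ℕ → ℕ) (i : ℕ) (u : ℕ × ℕ) : ℕ × ℕ :=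
  if u.1 = i - 1 ∨ u.1 = i then
    if u.2 ≤ μ i then (i - 1, windowRep (μ (i + 1)) (μ (i - 1)) u.2)
    else (u.1, u.2 - μ i + ν i)
  else u

section Collapse

variable {μ ν : ℕ → ℕ} {i l p : ℕ}

theorem collapse_of_le (hl : l = i - 1 ∨ l = i) (hp : p ≤ μ i) :
    collapse μ ν i (l, p) = (i - 1, windowRep (μ (i + 1)) (μ (i - 1)) p) := by
  simp only [collapse, if_pos hl, if_pos hp]

theorem collapse_of_lt (hl : l = i - 1 ∨ l = i) (hp : μ i < p) :
    collapse μ ν i (l, p) = (l, p - μ i + ν i) := by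
  simp only [collapse, if_pos hl, if_neg (not_le.2 hp)]

theorem collapse_of_ne (hl : l ≠ i - 1) (hl' : l ≠ i) : collapse μ ν i (l, p) = (l, p) := by
  simp only [collapse, if_neg (not_or.2 ⟨hl, hl'⟩)]

end Collapse

structure ResidueMove (μ ν : ℕ → ℕ) (i : ℕ) : Prop where
  one_le : 1 ≤ i
  succ_lt_pred : μ (i + 1) < μ (i - 1)
  eq_of_ne : ∀ j, j ≠ i → ν j = μ j
  succ_lt : μ (i + 1) < μ i
  succ_lt' : μ (i + 1) < ν i
  modEq : μ i ≡ ν i [MOD μ (i - 1) - μ (i + 1)]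

namespace ResidueMove

variable {μ ν : ℕ → ℕ} {i : ℕ} (h : ResidueMove μ ν i)
include h

theorem pred_eq : ν (i - 1) = μ (i - 1) := h.eq_of_ne _ (by have := h.one_le; omega)

theorem succ_eq : ν (i + 1) = μ (i + 1) := h.eq_of_ne _ (by omega)

theorem symm : ResidueMove ν μ i where
  one_le := h.one_le
  succ_lt_pred := by rw [h.pred_eq, h.succ_eq]; exact h.succ_lt_pred
  eq_of_ne j hj := (h.eq_of_ne j hj).symm
  succ_lt := by rw [h.succ_eq]; exact h.succ_lt'
  succ_lt' := by rw [h.succ_eq]; exact h.succ_lt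
  modEq := by rw [h.pred_eq, h.succ_eq]; exact h.modEq.symm

theorem isVert_collapse {n : ℕ} {u : ℕ × ℕ} (hu : IsVert n μ u) :
    IsVert n ν (collapse μ ν i u) := by
  obtain ⟨l, p⟩ := u
  obtain ⟨hln, hp1, hpl⟩ := hu
  have hsub : i - 1 + 1 = i := Nat.sub_add_cancel h.one_le
  by_cases hl : l = i - 1 ∨ l = i
  · by_cases hp : p ≤ μ i
    · rw [collapse_of_le hl hp]
      have := windowRep_le (p := p) h.succ_lt_pred
      refine ⟨by omega, one_le_windowRep hp1, ?_⟩
      simp only [hsub, h.pred_eq]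
      omega
    · rw [collapse_of_lt hl (by omega)]
      refine ⟨hln, by omega, ?_⟩
      rcases hl with rfl | rfl
      · simp only [hsub, h.pred_eq] at hpl ⊢
        omega
      · simp only [h.succ_eq] at hpl ⊢
        omega
  · rw [collapse_of_ne (by tauto) (by tauto)]
    refine ⟨hln, hp1, ?_⟩
    simp only [h.eq_of_ne l (by tauto), h.eq_of_ne (l + 1) (by omega)]
    exact hpl

theorem reachable_collapse_pred {p : ℕ} (hp : p ≤ μ i + (μ (i - 1) - μ (i + 1))) :
    (levelGraph ν).Reachable (collapse μ ν i (i - 1, p))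
      (i - 1, windowRep (μ (i + 1)) (μ (i - 1)) p) := by
  by_cases hpi : p ≤ μ i
  · rw [collapse_of_le (Or.inl rfl) hpi]
  · have := h.succ_lt
    have := h.succ_lt'
    rw [collapse_of_lt (Or.inl rfl) (by omega), ← windowRep_eq_of_modEq (p := p - μ i + ν i)
      (by omega) (by omega) (Nat.sub_add_modEq (by omega) h.modEq)]
    have hν := reachable_windowRep (μ := ν) h.one_le h.symm.succ_lt_pred (p := p - μ i + ν i)
      (by rw [h.succ_eq, h.pred_eq]; omega)
    rwa [h.succ_eq, h.pred_eq] at hν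

theorem reachable_collapse_bottom {l k : ℕ} (hl : 1 ≤ l) (hk : 1 ≤ k) (hkl : k ≤ μ l) :
    (levelGraph ν).Reachable (collapse μ ν i (l, k)) (collapse μ ν i (l - 1, k)) := by
  have hca := h.succ_lt_pred
  have hb := h.succ_lt
  obtain rfl | hli := eq_or_ne l i
  · rw [collapse_of_le (Or.inr rfl) hkl, collapse_of_le (Or.inl rfl) hkl]
  obtain rfl | hli' := eq_or_ne l (i + 1)
  · rw [collapse_of_ne (by omega) (by omega), Nat.add_sub_cancel,
      collapse_of_le (Or.inr rfl) (by omega), windowRep_of_le (by omega)]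
    have h1 := levelGraph_adj_bottom (μ := ν) hl hk (by rwa [h.succ_eq])
    have h2 := levelGraph_adj_bottom (μ := ν) h.one_le hk (by have := h.succ_lt'; omega)
    rw [Nat.add_sub_cancel] at h1
    exact h1.reachable.trans h2.reachable
  obtain hli'' | hli'' := eq_or_ne l (i - 1)
  · subst hli''
    rw [collapse_of_ne (l := i - 1 - 1) (by omega) (by omega)]
    have h1 := h.reachable_collapse_pred (p := k) (by omega)
    rw [windowRep_of_le hkl] at h1
    exact h1.trans (levelGraph_adj_bottom hl hk (by rwa [h.pred_eq])).reachable
  · rw [collapse_of_ne hli'' hli, collapse_of_ne (by omega) (by omega)]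
    exact (levelGraph_adj_bottom hl hk (by rwa [h.eq_of_ne l hli])).reachable

theorem reachable_collapse_top {l k : ℕ} (hl : 1 ≤ l) (hk : 1 ≤ k) (hkl : k ≤ μ l) :
    (levelGraph ν).Reachable (collapse μ ν i (l, μ (l + 1) + k))
      (collapse μ ν i (l - 1, μ (l - 1) + k)) := by
  have hca := h.succ_lt_pred
  have hB := h.succ_lt'
  obtain rfl | hli := eq_or_ne l i
  · by_cases hkB : μ (l + 1) + k ≤ μ l
    · rw [collapse_of_le (Or.inr rfl) hkB]
      have h1 := h.reachable_collapse_pred (p := μ (l - 1) + k) (by omega)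
      rw [windowRep_eq_of_modEq (q := μ (l + 1) + k) (by omega) (by omega) (by
        rw [show μ (l - 1) + k = μ (l + 1) + k + (μ (l - 1) - μ (l + 1)) by omega]
        exact Nat.add_modulus_modEq_iff.2 rfl)] at h1
      exact h1.symm
    · rw [collapse_of_lt (Or.inr rfl) (by omega), collapse_of_lt (Or.inl rfl) (by omega)]
      have h1 := levelGraph_adj_top (μ := ν) hl (k := k + ν l - μ l) (by omega) (by omega)
      rw [h.succ_eq, h.pred_eq,
        show μ (l + 1) + (k + ν l - μ l) = μ (l + 1) + k - μ l + ν l by omega,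
        show μ (l - 1) + (k + ν l - μ l) = μ (l - 1) + k - μ l + ν l by omega] at h1
      exact h1.reachable
  obtain rfl | hli' := eq_or_ne l (i + 1)
  · rw [collapse_of_ne (by omega) (by omega), Nat.add_sub_cancel,
      collapse_of_lt (Or.inr rfl) (by omega), show μ i + k - μ i + ν i = ν i + k by omega]
    have h1 := levelGraph_adj_top (μ := ν) hl hk (by rwa [h.succ_eq])
    rw [Nat.add_sub_cancel, h.eq_of_ne (i + 1 + 1) (by omega)] at h1
    exact h1.reachable
  obtain hli'' | hli'' := eq_or_ne l (i - 1)
  · subst hli''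
    rw [Nat.sub_add_cancel h.one_le, collapse_of_lt (Or.inl rfl) (by omega),
      show μ i + k - μ i + ν i = ν i + k by omega,
      collapse_of_ne (l := i - 1 - 1) (by omega) (by omega)]
    have h1 := levelGraph_adj_top (μ := ν) hl hk (by rwa [h.pred_eq])
    rw [Nat.sub_add_cancel h.one_le, h.eq_of_ne (i - 1 - 1) (by omega)] at h1
    exact h1.reachable
  · rw [collapse_of_ne hli'' hli, collapse_of_ne (by omega) (by omega)]
    have h1 := levelGraph_adj_top (μ := ν) hl hk (by rwa [h.eq_of_ne l hli])
    rw [h.eq_of_ne (l + 1) (by omega), h.eq_of_ne (l - 1) (by omega)] at h1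
    exact h1.reachable

theorem reachable_collapse_of_adj {u v : ℕ × ℕ} (huv : (levelGraph μ).Adj u v) :
    (levelGraph ν).Reachable (collapse μ ν i u) (collapse μ ν i v) := by
  have key : ∀ {u v}, LevelEdge μ u v →
      (levelGraph ν).Reachable (collapse μ ν i u) (collapse μ ν i v) := by
    intro u v he
    cases he with
    | bottom hl hk hkl => exact h.reachable_collapse_bottom hl hk hkl
    | top hl hk hkl => exact h.reachable_collapse_top hl hk hkl
  rcases ((fromRel_adj _ _ _).1 huv).2 with he | he
  exacts [key he, (key he).symm]

theorem reachable_collapse_collapse {u : ℕ × ℕ} (hu : 1 ≤ u.2) :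
    (levelGraph μ).Reachable u (collapse ν μ i (collapse μ ν i u)) := by
  obtain ⟨l, p⟩ := u
  by_cases hl : l = i - 1 ∨ l = i
  · by_cases hp : p ≤ μ i
    · rw [collapse_of_le hl hp]
      have hw := windowRep_le (p := p) h.succ_lt_pred
      have := h.succ_lt'
      have h1 := h.symm.reachable_collapse_pred (p := windowRep (μ (i + 1)) (μ (i - 1)) p)
        (by rw [h.pred_eq, h.succ_eq]; omega)
      rw [h.pred_eq, h.succ_eq, windowRep_of_le hw] at h1
      exact (reachable_windowRep_of_le h.one_le h.succ_lt_pred hl hu hp).trans h1.symm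
    · rw [collapse_of_lt hl (by omega), collapse_of_lt hl (by omega),
        show p - μ i + ν i - ν i + μ i = p by omega]
  · rw [collapse_of_ne (μ := μ) (by tauto) (by tauto), collapse_of_ne (by tauto) (by tauto)]

end ResidueMove

theorem NBand_eq_of_residueMove {n i : ℕ} {m m' : ℕ → ℕ}
    (h : ResidueMove (bandM n m) (bandM n m') i) : NBand n m = NBand n m' := by
  rw [NBand, NBand, bandGraph_eq_comap, bandGraph_eq_comap]
  have closed : ∀ {M : ℕ → ℕ} (u v : ℕ × ℕ), (levelGraph (bandM n M)).Adj u v →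
      IsVert n (bandM n M) u → IsVert n (bandM n M) v := fun _ _ huv _ => isVert_of_adj huv
  exact card_connectedComponent_eq_of_reachable
    (fun x => ⟨collapse _ _ i x.1, h.isVert_collapse x.2⟩)
    (fun y => ⟨collapse _ _ i y.1, h.symm.isVert_collapse y.2⟩)
    (fun _ _ hxy => reachable_comap_val_of_closed closed (h.reachable_collapse_of_adj hxy))
    (fun _ _ hxy => reachable_comap_val_of_closed closed (h.symm.reachable_collapse_of_adj hxy))
    (fun x => reachable_comap_val_of_closed closed (h.reachable_collapse_collapse x.2.2.1))
    (fun y => reachable_comap_val_of_closed closed (h.symm.reachable_collapse_collapse y.2.2.1))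

section Reverse

variable {n : ℕ} {μ ν : ℕ → ℕ}

theorem LevelEdge.reverse (hrev : ∀ l ≤ n + 1, ν l = μ (n + 1 - l)) {u v : ℕ × ℕ}
    (he : LevelEdge μ u v) (hu : u.1 ≤ n) : LevelEdge ν (n - v.1, v.2) (n - u.1, u.2) := by
  have hL : ∀ l, 1 ≤ l → l ≤ n → ν (n - (l - 1)) = μ l := fun l hl hln => by
    rw [hrev _ (by omega)]; congr 1; omega
  cases he with
  | @bottom l k hl hk hkl =>
    have he := LevelEdge.bottom (μ := ν) (l := n - (l - 1)) (by omega) hk (by rwa [hL l hl hu])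
    rwa [show n - (l - 1) - 1 = n - l by omega] at he
  | @top l k hl hk hkl =>
    have he := LevelEdge.top (μ := ν) (l := n - (l - 1)) (by omega) hk (by rwa [hL l hl hu])
    rwa [hrev _ (by omega), hrev _ (by omega), show n + 1 - (n - (l - 1) + 1) = l - 1 by omega,
      show n + 1 - (n - (l - 1) - 1) = l + 1 by omega, show n - (l - 1) - 1 = n - l by omega] at he

theorem levelGraph_adj_reverse (hrev : ∀ l ≤ n + 1, ν l = μ (n + 1 - l)) {u v : ℕ × ℕ}
    (huv : (levelGraph μ).Adj u v) (hu : u.1 ≤ n) (hv : v.1 ≤ n) :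
    (levelGraph ν).Adj (n - u.1, u.2) (n - v.1, v.2) := by
  rcases ((fromRel_adj _ _ _).1 huv).2 with he | he
  exacts [(he.reverse hrev hu).adj.symm, (he.reverse hrev hv).adj]

theorem IsVert.reverse (hrev : ∀ l ≤ n + 1, ν l = μ (n + 1 - l)) {u : ℕ × ℕ}
    (hu : IsVert n μ u) : IsVert n ν (n - u.1, u.2) := by
  obtain ⟨hln, hp1, hpl⟩ := hu
  refine ⟨Nat.sub_le _ _, hp1, ?_⟩
  simp only [hrev _ (by omega : n - u.1 ≤ n + 1), hrev _ (by omega : n - u.1 + 1 ≤ n + 1),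
    show n + 1 - (n - u.1) = u.1 + 1 by omega, show n + 1 - (n - u.1 + 1) = u.1 by omega]
  omega

end Reverse

theorem bandM_reverse (n : ℕ) (m : ℕ → ℕ) (l : ℕ) :
    bandM n (fun j => m (n + 1 - j)) l = bandM n m (n + 1 - l) := by
  unfold bandM
  by_cases hl : 1 ≤ l ∧ l ≤ n
  · rw [if_pos hl, if_pos (by omega)]
  · rw [if_neg hl, if_neg (by omega)]

theorem NBand_reverse (n : ℕ) (m : ℕ → ℕ) :
    NBand n m = NBand n (fun j => m (n + 1 - j)) := by
  have hrev : ∀ l ≤ n + 1, bandM n (fun j => m (n + 1 - j)) l = bandM n m (n + 1 - l) :=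
    fun l _ => bandM_reverse n m l
  have hrev' : ∀ l ≤ n + 1, bandM n m l = bandM n (fun j => m (n + 1 - j)) (n + 1 - l) :=
    fun l hl => by rw [bandM_reverse, Nat.sub_sub_self hl]
  rw [NBand, NBand, bandGraph_eq_comap, bandGraph_eq_comap]
  exact card_connectedComponent_eq_of_reachable
    (fun x => ⟨(n - x.1.1, x.1.2), IsVert.reverse hrev x.2⟩)
    (fun y => ⟨(n - y.1.1, y.1.2), IsVert.reverse hrev' y.2⟩)
    (fun x y hxy => Adj.reachable <| by exact levelGraph_adj_reverse hrev hxy x.2.1 y.2.1)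
    (fun x y hxy => Adj.reachable <| by exact levelGraph_adj_reverse hrev' hxy x.2.1 y.2.1)
    (fun x => by
      obtain ⟨⟨l, p⟩, hx⟩ := x
      simp only [Nat.sub_sub_self hx.1]
      rfl)
    (fun y => by
      obtain ⟨⟨l, p⟩, hy⟩ := y
      simp only [Nat.sub_sub_self hy.1]
      rfl)

section BandResidue

variable {n i : ℕ} {m m' : ℕ → ℕ}

theorem residueMove_bandM (hi1 : 1 ≤ i) (hi2 : i ≤ n) (hm' : ∀ j, j ≠ i → m' j = m j)
    (hlt : bandM n m (i + 1) < bandM n m (i - 1)) (hc : bandM n m (i + 1) < m i)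
    (hc' : bandM n m (i + 1) < m' i)
    (hmod : m i ≡ m' i [MOD bandM n m (i - 1) - bandM n m (i + 1)]) :
    ResidueMove (bandM n m) (bandM n m') i := by
  have hμ : ∀ M : ℕ → ℕ, bandM n M i = M i := fun _ => if_pos ⟨hi1, hi2⟩
  refine ⟨hi1, hlt, fun j hj => ?_, by rwa [hμ], by rwa [hμ], by rwa [hμ, hμ]⟩
  unfold bandM
  split_ifs
  exacts [hm' j hj, rfl]

theorem NBand_eq_of_modEq (hi1 : 1 ≤ i) (hi2 : i ≤ n) (hm' : ∀ j, j ≠ i → m' j = m j)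
    (hne : bandM n m (i - 1) ≠ bandM n m (i + 1))
    (hc : min (bandM n m (i - 1)) (bandM n m (i + 1)) < m i)
    (hc' : min (bandM n m (i - 1)) (bandM n m (i + 1)) < m' i)
    (hmod : m i ≡ m' i [MOD Nat.dist (bandM n m (i - 1)) (bandM n m (i + 1))]) :
    NBand n m = NBand n m' := by
  rcases lt_or_gt_of_ne hne with hlt | hlt
  · rw [NBand_reverse n m, NBand_reverse n m']
    refine NBand_eq_of_residueMove (residueMove_bandM (i := n + 1 - i) (by omega) (by omega)
      (fun j hj => hm' _ (by omega)) ?_ ?_ ?_ ?_) <;>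
    simp only [bandM_reverse, show n + 1 - (n + 1 - i + 1) = i - 1 by omega,
      show n + 1 - (n + 1 - i - 1) = i + 1 by omega, Nat.sub_sub_self (by omega : i ≤ n + 1)]
    · exact hlt
    · omega
    · omega
    · rwa [Nat.dist_eq_sub_of_le hlt.le] at hmod
  · refine NBand_eq_of_residueMove (residueMove_bandM hi1 hi2 hm' hlt (by omega) (by omega) ?_)
    rwa [Nat.dist_eq_sub_of_le_right hlt.le] at hmod

end BandResidue

theorem stmt5_general (n : ℕ) (m : ℕ → ℕ)
    (i : ℕ) (hi1 : 1 ≤ i) (hi2 : i ≤ n)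
    (hmax : max (bandM n m (i - 1)) (bandM n m (i + 1)) < m i) :
    NBand n m =
      NBand n (fun j =>
        if j = i then m i - Nat.dist (bandM n m (i - 1)) (bandM n m (i + 1)) else m j) := by
  have hd := Nat.dist_eq_max_sub_min (i := bandM n m (i - 1)) (j := bandM n m (i + 1))
  obtain hac | hac := eq_or_ne (bandM n m (i - 1)) (bandM n m (i + 1))
  · congr
    funext j
    split_ifs with hj
    · rw [hj, hac, Nat.dist_self, Nat.sub_zero]
    · rfl
  refine NBand_eq_of_modEq hi1 hi2 (fun j hj => if_neg hj) hac (by omega) ?_ ?_ <;>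
    rw [if_pos rfl]
  · omega
  · exact ((Nat.sub_modulus_modEq_iff (by omega)).2 rfl).symm

/-- If `m i > max (m (i-1)) (m (i+1))` (with the conventions `m 0 = m (n+1) = 0`), then
replacing `m i` by `m i - |m (i-1) - m (i+1)|` does not change the number of connected
components of the up-and-down graph of the band dimension vector. -/
theorem stmt5 (n : ℕ) (hn : 1 ≤ n) (m : ℕ → ℕ)
    (hpos : ∀ i, 1 ≤ i → i ≤ n → 0 < m i)
    (i : ℕ) (hi1 : 1 ≤ i) (hi2 : i ≤ n)
    (hmax : max (bandM n m (i - 1)) (bandM n m (i + 1)) < m i) :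
    NBand n m =
      NBand n (fun j =>
        if j = i then m i - Nat.dist (bandM n m (i - 1)) (bandM n m (i + 1)) else m j) :=
  stmt5_general n m i hi1 hi2 hmax
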